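/- arXiv:2602.15620 — 2 statements merged into one kernel-verified Lean document; each statement's English description precedes it below -/
import Mathlib

section
/- Let N ≥ 2 and let p ∈ ℝ^N be a probability vector with p_n > 0 for all n. Then the collision probability satisfies ∑_{n=1}^N p_n² ≤ 1 − C_N · H(p)², where H(p) = −∑_{n=1}^N p_n log p_n is the Shannon entropy and C_N = (N − 1) / (N · (log N)²). In particular, equality holds both at the uniform distribution (where ∑ p_n² = 1/N and H(p) = log N) and in the limit of a deterministic distribution. -/
/-!
Writing `p log p = √(p (1 - p)) · √(φ p)` with `φ x = x (log x)² / (1 - x)`, Cauchy–Schwarz gives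
`H(p)² ≤ (1 - ∑ pₙ²) · ∑ φ(pₙ)`. The function `φ` is concave on `(0, 1)`, so by Jensen
`∑ φ(pₙ) ≤ N φ(1/N) = N (log N)² / (N - 1) = 1 / C_N`.
-/

/-- The Shannon entropy (with natural logarithm) of a vector `p : ℝ^N`,
`H(p) = -∑ n, p n * log (p n)`. -/
noncomputable def shannonEntropy {N : ℕ} (p : Fin N → ℝ) : ℝ :=
  -∑ n, p n * Real.log (p n)

open Real Finset

lemma hasDerivAt_mul_log_sq_div_one_sub {x : ℝ} (hx₀ : x ≠ 0) (hx₁ : x ≠ 1) :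
    HasDerivAt (fun y ↦ y * log y ^ 2 / (1 - y))
      ((log x ^ 2 + 2 * log x * (1 - x)) / (1 - x) ^ 2) x := by
  have hsub : 1 - x ≠ 0 := sub_ne_zero.2 hx₁.symm
  refine (((hasDerivAt_id' x).fun_mul ((hasDerivAt_log hx₀).fun_pow 2)).fun_div
    ((hasDerivAt_id' x).const_sub 1) hsub).congr_deriv ?_
  field_simp
  ring

lemma hasDerivAt_deriv_mul_log_sq_div_one_sub {x : ℝ} (hx₀ : x ≠ 0) (hx₁ : x ≠ 1) :
    HasDerivAt (fun y ↦ (log y ^ 2 + 2 * log y * (1 - y)) / (1 - y) ^ 2)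
      (2 * (log x + 1 - x) * (log x - 1 + x⁻¹) / (1 - x) ^ 3) x := by
  have hlog := hasDerivAt_log hx₀
  have hsub := (hasDerivAt_id' x).const_sub 1
  have hsub₀ : 1 - x ≠ 0 := sub_ne_zero.2 hx₁.symm
  refine (((hlog.fun_pow 2).fun_add ((hlog.const_mul 2).fun_mul hsub)).fun_div (hsub.fun_pow 2)
    (pow_ne_zero 2 hsub₀)).congr_deriv ?_
  field_simp
  ring

lemma concaveOn_mul_log_sq_div_one_sub :
    ConcaveOn ℝ (Set.Ioo 0 1) (fun x ↦ x * log x ^ 2 / (1 - x)) := by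
  refine concaveOn_of_hasDerivWithinAt2_nonpos (convex_Ioo 0 1)
    (f' := fun x ↦ (log x ^ 2 + 2 * log x * (1 - x)) / (1 - x) ^ 2)
    (f'' := fun x ↦ 2 * (log x + 1 - x) * (log x - 1 + x⁻¹) / (1 - x) ^ 3)
    (fun x hx ↦
      (hasDerivAt_mul_log_sq_div_one_sub hx.1.ne' hx.2.ne).continuousAt.continuousWithinAt)
    (fun x hx ↦ ?_) (fun x hx ↦ ?_) (fun x hx ↦ ?_) <;> simp only [interior_Ioo] at hx ⊢
  · exact (hasDerivAt_mul_log_sq_div_one_sub hx.1.ne' hx.2.ne).hasDerivWithinAt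
  · exact (hasDerivAt_deriv_mul_log_sq_div_one_sub hx.1.ne' hx.2.ne).hasDerivWithinAt
  · obtain ⟨hx₀, hx₁⟩ := hx
    have h₁ := log_le_sub_one_of_pos hx₀
    have h₂ := one_sub_inv_le_log_of_pos hx₀
    refine div_nonpos_of_nonpos_of_nonneg ?_ (pow_pos (sub_pos.2 hx₁) 3).le
    exact mul_nonpos_of_nonpos_of_nonneg (by linarith) (by linarith)

theorem ConcaveOn.sum_le_card_mul_map_average {E ι : Type*} [AddCommGroup E] [Module ℝ E]
    [Fintype ι] [Nonempty ι] {s : Set E} {f : E → ℝ} (hf : ConcaveOn ℝ s f) {x : ι → E}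
    (hx : ∀ i, x i ∈ s) :
    ∑ i, f (x i) ≤ Fintype.card ι * f ((Fintype.card ι : ℝ)⁻¹ • ∑ i, x i) := by
  have hcard : (0 : ℝ) < Fintype.card ι := by exact_mod_cast Fintype.card_pos
  have h := hf.le_map_sum (t := univ) (w := fun _ ↦ (Fintype.card ι : ℝ)⁻¹)
    (fun _ _ ↦ inv_nonneg.2 hcard.le) (by simp [hcard.ne']) (fun i _ ↦ hx i)
  rw [← smul_sum, ← smul_sum, smul_eq_mul] at h
  rwa [← inv_mul_le_iff₀ hcard]

theorem sq_sum_mul_log_le_sum_mul_sum {ι : Type*} (s : Finset ι) {p : ι → ℝ}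
    (hp₀ : ∀ i ∈ s, 0 ≤ p i) (hp₁ : ∀ i ∈ s, p i < 1) :
    (∑ i ∈ s, p i * log (p i)) ^ 2 ≤
      (∑ i ∈ s, p i * (1 - p i)) * ∑ i ∈ s, p i * log (p i) ^ 2 / (1 - p i) := by
  refine sum_sq_le_sum_mul_sum_of_sq_le_mul s
    (fun i hi ↦ mul_nonneg (hp₀ i hi) (sub_nonneg.2 (hp₁ i hi).le))
    (fun i hi ↦ div_nonneg (mul_nonneg (hp₀ i hi) (sq_nonneg _)) (sub_nonneg.2 (hp₁ i hi).le))
    (fun i hi ↦ le_of_eq ?_)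
  have : 1 - p i ≠ 0 := (sub_pos.2 (hp₁ i hi)).ne'
  field_simp

theorem lt_one_of_sum_eq_one {ι : Type*} [Fintype ι] (hι : 1 < Fintype.card ι) {p : ι → ℝ}
    (hp : ∀ i, 0 < p i) (hsum : ∑ i, p i = 1) (i : ι) : p i < 1 := by
  obtain ⟨j, hji⟩ := Fintype.exists_ne_of_one_lt_card hι i
  exact hsum ▸ single_lt_sum hji (mem_univ i) (mem_univ j) (hp j) fun k _ _ ↦ (hp k).le

theorem inv_mul_log_inv_sq_div_one_sub_inv {x : ℝ} (hx : 1 < x) :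
    x⁻¹ * log x⁻¹ ^ 2 / (1 - x⁻¹) = log x ^ 2 / (x - 1) := by
  have : x - 1 ≠ 0 := (sub_pos.2 hx).ne'
  rw [log_inv, neg_sq]
  field_simp

theorem shannonEntropy_uniform (N : ℕ) :
    shannonEntropy (fun _ : Fin N ↦ 1 / (N : ℝ)) = log N := by
  rcases N.eq_zero_or_pos with rfl | hN
  · simp [shannonEntropy]
  · have : (N : ℝ) ≠ 0 := by positivity
    simp only [shannonEntropy, one_div, log_inv, mul_neg, sum_neg_distrib, sum_const, card_univ,
      Fintype.card_fin, nsmul_eq_mul, neg_neg]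
    field_simp

/-- For a strictly positive probability vector `p` on `N ≥ 2` symbols, the collision
probability satisfies `∑ n, p n² ≤ 1 - C_N · H(p)²` with `C_N = (N-1)/(N (log N)²)`;
moreover equality holds at the uniform distribution. -/
theorem collision_prob_le_one_sub_CN_mul_entropy_sq
    (N : ℕ) (hN : 2 ≤ N) (p : Fin N → ℝ)
    (hp : ∀ n, 0 < p n) (hsum : ∑ n, p n = 1) :
    ∑ n, (p n) ^ 2
      ≤ 1 - ((N : ℝ) - 1) / ((N : ℝ) * Real.log N ^ 2) * (shannonEntropy p) ^ 2 ∧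
    ((∀ n, p n = 1 / (N : ℝ)) →
      ∑ n, (p n) ^ 2
        = 1 - ((N : ℝ) - 1) / ((N : ℝ) * Real.log N ^ 2) * (shannonEntropy p) ^ 2) := by
  have hN₁ : (1 : ℝ) < N := by exact_mod_cast hN
  have hlogN : 0 < log N := log_pos hN₁
  constructor
  · have hp₁ := lt_one_of_sum_eq_one (by rwa [Fintype.card_fin]) hp hsum
    have : Nonempty (Fin N) := ⟨⟨0, by omega⟩⟩
    have hvar : ∑ n, p n * (1 - p n) = 1 - ∑ n, p n ^ 2 := by
      simp only [mul_one_sub, ← sq, sum_sub_distrib, hsum]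
    have hJensen : ∑ n, p n * log (p n) ^ 2 / (1 - p n) ≤ N * (log N ^ 2 / (N - 1)) := by
      simpa only [Fintype.card_fin, hsum, smul_eq_mul, mul_one,
          inv_mul_log_inv_sq_div_one_sub_inv hN₁]
        using concaveOn_mul_log_sq_div_one_sub.sum_le_card_mul_map_average
          (fun n ↦ ⟨hp n, hp₁ n⟩)
    have hH : shannonEntropy p ^ 2 ≤ (1 - ∑ n, p n ^ 2) * (N * (log N ^ 2 / (N - 1))) := by
      rw [shannonEntropy, neg_sq, ← hvar]
      refine (sq_sum_mul_log_le_sum_mul_sum univ (fun n _ ↦ (hp n).le) (fun n _ ↦ hp₁ n)).trans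
        (mul_le_mul_of_nonneg_left hJensen ?_)
      exact sum_nonneg fun n _ ↦ mul_nonneg (hp n).le (sub_pos.2 (hp₁ n)).le
    rw [le_sub_comm, div_mul_eq_mul_div, div_le_iff₀ (by positivity)]
    calc (N - 1) * shannonEntropy p ^ 2
        ≤ (N - 1) * ((1 - ∑ n, p n ^ 2) * (N * (log N ^ 2 / (N - 1)))) := by gcongr
      _ = (1 - ∑ n, p n ^ 2) * (N * log N ^ 2) := by
          field_simp [(sub_pos.2 hN₁).ne']
  · intro hu
    obtain rfl : p = fun _ ↦ 1 / (N : ℝ) := funext hu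
    rw [shannonEntropy_uniform]
    simp only [one_div, inv_pow, sum_const, card_univ, Fintype.card_fin, nsmul_eq_mul]
    field_simp
    ring
end

section
/- (Policy Gradient Norm, lower bound.) Let N ≥ 1, let a ∈ ℝ^N be a logits vector with softmax distribution p = softmax(a), let k be a fixed target index, and let w ∈ ℝ be a fixed scalar weight. Define J(a) = w · log(softmax(a)_k) and let H(p) = −∑_{n=1}^N p_n log p_n be the Shannon entropy of p. Then the squared Euclidean norm of the gradient of J with respect to a satisfies ‖∇_a J‖² ≥ w² · (1 − 2 p_k + exp(−H(p))). -/
/-- The softmax distribution induced by a logits vector `a ∈ ℝ^N`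
(with the Euclidean structure). -/
noncomputable def softmax {N : ℕ} (a : EuclideanSpace ℝ (Fin N)) : Fin N → ℝ :=
  fun n => Real.exp (a n) / ∑ m, Real.exp (a m)

/-!
The gradient of `w * log (softmax a k)` is `w • (e_k - p)` with `p = softmax a`, so its squared
norm is `w² (1 - 2 p_k + ∑ p_n²)`. Jensen's inequality for `exp`, with weights `p_n` at the
points `log p_n`, gives `exp (-H p) = exp (∑ p_n log p_n) ≤ ∑ p_n · p_n`.
-/

open Real InnerProductSpace

theorem HasGradientAt.const_mul {F : Type*} [NormedAddCommGroup F] [InnerProductSpace ℝ F]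
    [CompleteSpace F] {f : F → ℝ} {f' x : F} (hf : HasGradientAt f f' x) (c : ℝ) :
    HasGradientAt (fun x => c * f x) (c • f') x := by
  rw [hasGradientAt_iff_hasFDerivAt] at hf ⊢
  simpa using hf.const_mul c

theorem hasGradientAt_of_hasFDerivAt_of_inner {F : Type*} [NormedAddCommGroup F]
    [InnerProductSpace ℝ F] [CompleteSpace F] {f : F → ℝ} {L : StrongDual ℝ F} {g x : F}
    (hf : HasFDerivAt f L x) (hL : ∀ y, L y = ⟪g, y⟫_ℝ) : HasGradientAt f g x := by
  rwa [hasGradientAt_iff_hasFDerivAt, show toDual ℝ F g = L from ContinuousLinearMap.ext fun y => (hL y).symm]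

theorem hasFDerivAt_sum_exp {ι : Type*} [Fintype ι] (a : EuclideanSpace ℝ ι) :
    HasFDerivAt (fun a : EuclideanSpace ℝ ι => ∑ m, exp (a m))
      (∑ m, exp (a m) • EuclideanSpace.proj (𝕜 := ℝ) m) a :=
  HasFDerivAt.fun_sum fun m _ => (EuclideanSpace.proj (𝕜 := ℝ) m).hasFDerivAt.exp

theorem sum_exp_pos {ι : Type*} [Fintype ι] [Nonempty ι] (x : ι → ℝ) : 0 < ∑ m, exp (x m) :=
  Finset.sum_pos (fun _ _ => exp_pos _) Finset.univ_nonempty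

theorem softmax_pos {N : ℕ} (a : EuclideanSpace ℝ (Fin N)) (n : Fin N) : 0 < softmax a n :=
  have : Nonempty (Fin N) := ⟨n⟩
  div_pos (exp_pos _) (sum_exp_pos _)

theorem sum_softmax {N : ℕ} [Nonempty (Fin N)] (a : EuclideanSpace ℝ (Fin N)) :
    ∑ n, softmax a n = 1 := by
  simp only [softmax, ← Finset.sum_div]
  exact div_self (sum_exp_pos _).ne'

theorem log_softmax {N : ℕ} (a : EuclideanSpace ℝ (Fin N)) (k : Fin N) :
    log (softmax a k) = a k - log (∑ m, exp (a m)) := by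
  have : Nonempty (Fin N) := ⟨k⟩
  rw [softmax, log_div (exp_ne_zero _) (sum_exp_pos _).ne', log_exp]

theorem hasGradientAt_log_softmax {N : ℕ} (a : EuclideanSpace ℝ (Fin N)) (k : Fin N) :
    HasGradientAt (fun a : EuclideanSpace ℝ (Fin N) => log (softmax a k))
      (EuclideanSpace.single k 1 - WithLp.toLp 2 (softmax a)) a := by
  have : Nonempty (Fin N) := ⟨k⟩
  simp only [log_softmax]
  refine hasGradientAt_of_hasFDerivAt_of_inner ((EuclideanSpace.proj k).hasFDerivAt.sub
    ((hasFDerivAt_sum_exp a).log (sum_exp_pos _).ne')) fun y => ?_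
  rw [inner_sub_left, EuclideanSpace.inner_single_left, PiLp.inner_apply]
  simp only [sub_apply, PiLp.proj_apply, smul_apply, sum_apply, smul_eq_mul, Finset.mul_sum,
    ringHom_apply, one_mul, softmax, RCLike.inner_apply, map_div₀, map_sum, sub_right_inj]
  exact Finset.sum_congr rfl fun _ _ => by ring

theorem norm_single_sub_sq {ι : Type*} [Fintype ι] [DecidableEq ι] (p : ι → ℝ) (k : ι) :
    ‖EuclideanSpace.single k 1 - WithLp.toLp 2 p‖ ^ 2 = 1 - 2 * p k + ∑ n, p n ^ 2 := by
  rw [norm_sub_sq_real, EuclideanSpace.inner_single_left, EuclideanSpace.real_norm_sq_eq,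
    EuclideanSpace.real_norm_sq_eq]
  simp

theorem exp_neg_shannonEntropy_le_sum_sq {N : ℕ} {p : Fin N → ℝ} (hp : ∀ n, 0 ≤ p n)
    (hsum : ∑ n, p n = 1) : exp (-shannonEntropy p) ≤ ∑ n, p n ^ 2 := by
  have hexp_log : ∀ n, p n * exp (log (p n)) = p n ^ 2 := fun n => by
    rcases (hp n).eq_or_lt with h | h
    · simp [← h]
    · rw [exp_log h, sq]
  calc exp (-shannonEntropy p) = exp (∑ n, p n • log (p n)) := by simp [shannonEntropy]
    _ ≤ ∑ n, p n • exp (log (p n)) :=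
      convexOn_exp.map_sum_le (fun n _ => hp n) hsum fun n _ => Set.mem_univ _
    _ = ∑ n, p n ^ 2 := by simp only [smul_eq_mul, hexp_log]

theorem policy_gradient_norm_lower_bound_general
    (N : ℕ) (a : EuclideanSpace ℝ (Fin N)) (k : Fin N) (w : ℝ) :
    ‖gradient (fun a : EuclideanSpace ℝ (Fin N) => w * Real.log (softmax a k)) a‖ ^ 2
      ≥ w ^ 2 * (1 - 2 * softmax a k + Real.exp (-(shannonEntropy (softmax a)))) := by
  have : Nonempty (Fin N) := ⟨k⟩
  rw [((hasGradientAt_log_softmax a k).const_mul w).gradient, norm_smul, mul_pow,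
    norm_single_sub_sq, Real.norm_eq_abs, sq_abs]
  gcongr
  exact exp_neg_shannonEntropy_le_sum_sq (fun n => (softmax_pos a n).le) (sum_softmax a)

/-- Policy gradient norm, lower bound: for `J(a) = w · log (softmax a k)` and
`p = softmax a`, `‖∇_a J‖² ≥ w² (1 - 2 p_k + exp (-H(p)))`. -/
theorem policy_gradient_norm_lower_bound
    (N : ℕ) (hN : 1 ≤ N) (a : EuclideanSpace ℝ (Fin N)) (k : Fin N) (w : ℝ) :
    ‖gradient (fun a : EuclideanSpace ℝ (Fin N) => w * Real.log (softmax a k)) a‖ ^ 2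
      ≥ w ^ 2 * (1 - 2 * softmax a k + Real.exp (-(shannonEntropy (softmax a)))) :=
  policy_gradient_norm_lower_bound_general N a k w
end
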